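/- Consider the GTSP instance G_G on m clusters and, for a cluster permutation pi, let a(pi) denote the number of indices i in {0,...,m-1} such that the clusters at cyclically consecutive positions i and i+1 of pi are consecutive modulo m (i.e., their labels differ by 1 mod m). Then for every non-optimal cluster permutation pi, the lower-level optimal node selection uses only white nodes and the cost of pi equals c(pi) = m + a(pi). Consequently, if pi and pi' are two non-optimal cluster permutations with a(pi') > a(pi), then c(pi') > c(pi). -/

import Mathlib

open scoped ENNReal BigOperators Classical

noncomputable section

/-- The cyclic successor of a position/label `i` in `Fin m`: `(i + 1) mod m`. -/
def cyc {m : ℕ} (i : Fin m) : Fin m :=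
  ⟨(i.val + 1) % m, Nat.mod_lt _ (Nat.lt_of_le_of_lt (Nat.zero_le i.val) i.isLt)⟩

/-- The lower-level value of a cluster permutation `π`: the minimum over node selections
`p i ∈ Vc i` of the cost of the Hamiltonian cycle visiting the selected nodes in the cyclic
order given by `π` (the lower-level problem is solved optimally). -/
def tourValue {V : Type*} (c : V → V → ℝ≥0∞) {m : ℕ} (Vc : Fin m → Finset V)
    (π : Fin m → Fin m) : ℝ≥0∞ :=
  ⨅ (p : Fin m → V) (_ : ∀ i, p i ∈ Vc i), ∑ i : Fin m, c (p (π i)) (p (π (cyc i)))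

/-- Optimal upper-level solutions of the GTSP: cluster permutations whose lower-level value
is globally minimal. -/
def OptTour {V : Type*} (c : V → V → ℝ≥0∞) {m : ℕ} (Vc : Fin m → Finset V)
    (π : Fin m → Fin m) : Prop :=
  Function.Bijective π ∧
    ∀ σ : Fin m → Fin m, Function.Bijective σ → tourValue c Vc π ≤ tourValue c Vc σ
/-- The node set of the GTSP instance `G_G`: cluster `i` (labels modulo `m`) contains the
black node `b_i = (i, false)` and the white node `w_i = (i, true)`. -/
abbrev VT (m : ℕ) := Fin m × Bool

/-- The clusters of the GTSP instance `G_G`. -/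
def VcT (m : ℕ) : Fin m → Finset (VT m) := fun i => {(i, false), (i, true)}

/-- The edge costs of the GTSP instance `G_G`: `c(b_i, b_{i+1 mod m}) = 1/m` for every `i`;
`c(w_i, w_{i+1 mod m}) = 2` for every `i`; `c(w_i, w_j) = 1` for every other pair of
distinct white nodes; and every edge between a black node and a white node, as well as
every remaining edge between two black nodes, has cost `m²`. -/
def cT (m : ℕ) (p q : VT m) : ℝ≥0∞ :=
  if p = q then 0
  else if p.2 = false ∧ q.2 = false then
    (if q.1 = cyc p.1 ∨ p.1 = cyc q.1 then (m : ℝ≥0∞)⁻¹ else (m : ℝ≥0∞) ^ 2)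
  else if p.2 = true ∧ q.2 = true then
    (if q.1 = cyc p.1 ∨ p.1 = cyc q.1 then 2 else 1)
  else (m : ℝ≥0∞) ^ 2

/-- `aCount m π` is the number of indices `i ∈ {0,…,m-1}` such that the clusters at the
cyclically consecutive positions `i` and `i+1` of `π` are consecutive modulo `m`, i.e.
their labels differ by `1` mod `m`. -/
def aCount (m : ℕ) (π : Fin m → Fin m) : ℕ :=
  (Finset.univ.filter (fun i : Fin m => π (cyc i) = cyc (π i) ∨ π i = cyc (π (cyc i)))).card

/-! The all-white selection costs `m + a(π)`: each white edge costs `1`, plus `1` more for each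
of the `a(π)` pairs of consecutive clusters. A selection with a black node either switches colour
somewhere along the tour or is all black; either way some edge costs `m²`, a black–white edge or a
black edge between non-consecutive clusters (one exists since `a(π) < m`), and `m² > m + a(π)`.
Finally `a(π) < m` for non-optimal `π`: if `a(π) = m` the all-black tour costs `m · 1/m = 1`,
while every edge costs at least `1/m`, so no tour is cheaper. -/

section

variable {m : ℕ}

theorem cyc_ne_self (hm : 2 ≤ m) (i : Fin m) : cyc i ≠ i := by
  intro h
  have hval : (i.val + 1) % m = i.val := congrArg Fin.val h
  rcases Nat.lt_or_ge (i.val + 1) m with hlt | hge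
  · rw [Nat.mod_eq_of_lt hlt] at hval
    omega
  · rw [show i.val + 1 = m by omega, Nat.mod_self] at hval
    omega

theorem cyc_mk {n : ℕ} (hn : n + 1 < m) : cyc (⟨n, by omega⟩ : Fin m) = ⟨n + 1, hn⟩ :=
  Fin.ext (Nat.mod_eq_of_lt hn)

theorem exists_apply_cyc_ne {α : Sort*} {f : Fin m → α} {j k : Fin m} (hjk : f j ≠ f k) :
    ∃ i, f (cyc i) ≠ f i := by
  by_contra! h
  have hconst : ∀ i : Fin m, f i = f ⟨0, j.pos⟩ := by
    rintro ⟨n, hn⟩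
    induction n with
    | zero => rfl
    | succ n ih => rw [← cyc_mk hn, h]; exact ih (by omega)
  exact hjk ((hconst j).trans (hconst k).symm)

theorem apply_cyc_ne {π : Fin m → Fin m} (hm : 2 ≤ m) (hπ : Function.Injective π) (i : Fin m) :
    π i ≠ π (cyc i) :=
  fun h => cyc_ne_self hm i (hπ h).symm

theorem eq_of_mem_VcT {i : Fin m} {p : VT m} (h : p ∈ VcT m i) : p = (i, p.2) := by
  rcases Finset.mem_insert.mp h with h | h
  · rw [h]
  · rw [Finset.mem_singleton.mp h]

theorem cT_white {i j : Fin m} (hij : i ≠ j) :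
    cT m (i, true) (j, true) = if j = cyc i ∨ i = cyc j then 2 else 1 := by
  simp [cT, hij]

theorem cT_black {i j : Fin m} (hij : i ≠ j) :
    cT m (i, false) (j, false) =
      if j = cyc i ∨ i = cyc j then (m : ℝ≥0∞)⁻¹ else (m : ℝ≥0∞) ^ 2 := by
  simp [cT, hij]

theorem cT_of_snd_ne {p q : VT m} (h : p.2 ≠ q.2) : cT m p q = (m : ℝ≥0∞) ^ 2 := by
  obtain ⟨i, _ | _⟩ := p <;> obtain ⟨j, _ | _⟩ := q <;> simp_all [cT]

theorem inv_le_cT (hm : 1 ≤ m) {p q : VT m} (h : p ≠ q) : (m : ℝ≥0∞)⁻¹ ≤ cT m p q := by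
  have hinv : (m : ℝ≥0∞)⁻¹ ≤ 1 := ENNReal.inv_le_one.mpr (by exact_mod_cast hm)
  have hsq : (1 : ℝ≥0∞) ≤ (m : ℝ≥0∞) ^ 2 := one_le_pow₀ (by exact_mod_cast hm)
  unfold cT
  split_ifs <;> first | contradiction | exact le_rfl | exact hinv.trans hsq |
    exact hinv.trans (by norm_num)

theorem aCount_le (π : Fin m → Fin m) : aCount m π ≤ m :=
  (Finset.card_filter_le _ _).trans_eq (Finset.card_fin m)

theorem aCount_eq_iff {π : Fin m → Fin m} :
    aCount m π = m ↔ ∀ i, π (cyc i) = cyc (π i) ∨ π i = cyc (π (cyc i)) := by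
  simpa [aCount] using Finset.card_filter_eq_iff (s := (Finset.univ : Finset (Fin m)))
    (p := fun i => π (cyc i) = cyc (π i) ∨ π i = cyc (π (cyc i)))

theorem sum_fin_inv_self (hm : m ≠ 0) : ∑ _i : Fin m, (m : ℝ≥0∞)⁻¹ = 1 := by
  rw [Finset.sum_const, Finset.card_fin, nsmul_eq_mul,
    ENNReal.mul_inv_cancel (Nat.cast_ne_zero.mpr hm) (ENNReal.natCast_ne_top m)]

theorem one_le_tourValue (hm : 2 ≤ m) {σ : Fin m → Fin m} (hσ : Function.Injective σ) :
    1 ≤ tourValue (cT m) (VcT m) σ := by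
  refine le_iInf₂ fun p hp => ?_
  have hedge (i : Fin m) : (m : ℝ≥0∞)⁻¹ ≤ cT m (p (σ i)) (p (σ (cyc i))) := by
    refine inv_le_cT (by omega) fun h => apply_cyc_ne hm hσ i ?_
    rw [eq_of_mem_VcT (hp (σ i)), eq_of_mem_VcT (hp (σ (cyc i)))] at h
    exact congrArg Prod.fst h
  calc (1 : ℝ≥0∞) = ∑ _i : Fin m, (m : ℝ≥0∞)⁻¹ := (sum_fin_inv_self (by omega)).symm
    _ ≤ _ := Finset.sum_le_sum fun i _ => hedge i

theorem optTour_of_aCount_eq (hm : 2 ≤ m) {π : Fin m → Fin m} (hπ : Function.Bijective π)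
    (h : aCount m π = m) : OptTour (cT m) (VcT m) π := by
  refine ⟨hπ, fun σ hσ => le_trans ?_ (one_le_tourValue hm hσ.1)⟩
  have hblack (i : Fin m) : cT m (π i, false) (π (cyc i), false) = (m : ℝ≥0∞)⁻¹ := by
    rw [cT_black (apply_cyc_ne hm hπ.1 i), if_pos (aCount_eq_iff.mp h i)]
  calc tourValue (cT m) (VcT m) π
      ≤ ∑ i : Fin m, cT m (π i, false) (π (cyc i), false) :=
        iInf₂_le (fun j => (j, false)) fun i => by simp [VcT]
    _ = 1 := by rw [Finset.sum_congr rfl fun i _ => hblack i, sum_fin_inv_self (by omega)]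

theorem two_le_of_not_optTour {π : Fin m → Fin m} (hπ : Function.Bijective π)
    (h : ¬ OptTour (cT m) (VcT m) π) : 2 ≤ m := by
  by_contra! hm
  have : Subsingleton (Fin m) := Fin.subsingleton_iff_le_one.mpr (by omega)
  exact h ⟨hπ, fun σ _ => by rw [Subsingleton.elim π σ]⟩

theorem aCount_lt_of_not_optTour {π : Fin m → Fin m} (hπ : Function.Bijective π)
    (h : ¬ OptTour (cT m) (VcT m) π) : aCount m π < m :=
  (aCount_le π).lt_of_ne fun ha => h (optTour_of_aCount_eq (two_le_of_not_optTour hπ h) hπ ha)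

theorem sum_cT_white (hm : 2 ≤ m) {π : Fin m → Fin m} (hπ : Function.Injective π) :
    ∑ i : Fin m, cT m (π i, true) (π (cyc i), true) = (m : ℝ≥0∞) + (aCount m π : ℝ≥0∞) := by
  have hedge (i : Fin m) : cT m (π i, true) (π (cyc i), true) =
      1 + if π (cyc i) = cyc (π i) ∨ π i = cyc (π (cyc i)) then (1 : ℝ≥0∞) else 0 := by
    rw [cT_white (apply_cyc_ne hm hπ i)]
    split_ifs <;> norm_num
  rw [Finset.sum_congr rfl fun i _ => hedge i, Finset.sum_add_distrib, Finset.sum_const,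
    Finset.sum_boole]
  simp [aCount]

theorem sq_le_sum_cT (hm : 2 ≤ m) {π : Fin m → Fin m} (hπ : Function.Bijective π)
    (ha : aCount m π < m) {p : Fin m → VT m} (hp : ∀ i, p i ∈ VcT m i) {j : Fin m}
    (hj : (p j).2 = false) :
    (m : ℝ≥0∞) ^ 2 ≤ ∑ i : Fin m, cT m (p (π i)) (p (π (cyc i))) := by
  suffices ∃ k, cT m (p (π k)) (p (π (cyc k))) = (m : ℝ≥0∞) ^ 2 by
    obtain ⟨k, hk⟩ := this
    exact hk ▸ Finset.single_le_sum (f := fun i => cT m (p (π i)) (p (π (cyc i))))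
      (fun _ _ => zero_le) (Finset.mem_univ k)
  by_cases hwhite : ∃ j', (p j').2 = true
  · obtain ⟨j', hj'⟩ := hwhite
    obtain ⟨k, rfl⟩ := hπ.2 j
    obtain ⟨k', rfl⟩ := hπ.2 j'
    obtain ⟨i, hi⟩ := exists_apply_cyc_ne (f := fun i => (p (π i)).2) (j := k) (k := k')
      (by simp [hj, hj'])
    exact ⟨i, cT_of_snd_ne (Ne.symm hi)⟩
  · push Not at hwhite
    have hblack (i : Fin m) : p i = (i, false) := by
      simpa using (eq_of_mem_VcT (hp i)).trans (by rw [Bool.eq_false_iff.mpr (hwhite i)])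
    obtain ⟨k, hk⟩ : ∃ k, ¬ (π (cyc k) = cyc (π k) ∨ π k = cyc (π (cyc k))) := by
      by_contra! h
      exact ha.ne (aCount_eq_iff.mpr h)
    exact ⟨k, by rw [hblack, hblack, cT_black (apply_cyc_ne hm hπ.1 k), if_neg hk]⟩

theorem add_lt_sq_of_lt (hm : 2 ≤ m) {a : ℕ} (ha : a < m) :
    (m : ℝ≥0∞) + (a : ℝ≥0∞) < (m : ℝ≥0∞) ^ 2 := by
  exact_mod_cast (by nlinarith : m + a < m ^ 2)

theorem tourValue_eq_of_aCount_lt (hm : 2 ≤ m) {π : Fin m → Fin m} (hπ : Function.Bijective π)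
    (ha : aCount m π < m) :
    tourValue (cT m) (VcT m) π = (m : ℝ≥0∞) + (aCount m π : ℝ≥0∞) := by
  refine le_antisymm ?_ (le_iInf₂ fun p hp => ?_)
  · exact sum_cT_white hm hπ.1 ▸ iInf₂_le (fun j => (j, true)) fun i => by simp [VcT]
  · by_cases hwhite : ∀ i, (p i).2 = true
    · have hp' : p = fun j => (j, true) :=
        funext fun i => (eq_of_mem_VcT (hp i)).trans (by rw [hwhite i])
      rw [hp', sum_cT_white hm hπ.1]
    · push Not at hwhite
      obtain ⟨j, hj⟩ := hwhite
      exact (add_lt_sq_of_lt hm ha).le.trans (sq_le_sum_cT hm hπ ha hp (by simpa using hj))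

theorem tourValue_eq_of_not_optTour {π : Fin m → Fin m} (hπ : Function.Bijective π)
    (hopt : ¬ OptTour (cT m) (VcT m) π) :
    tourValue (cT m) (VcT m) π = (m : ℝ≥0∞) + (aCount m π : ℝ≥0∞) :=
  tourValue_eq_of_aCount_lt (two_le_of_not_optTour hπ hopt) hπ (aCount_lt_of_not_optTour hπ hopt)

theorem snd_eq_true_of_sum_cT_eq_tourValue {π : Fin m → Fin m} (hπ : Function.Bijective π)
    (hopt : ¬ OptTour (cT m) (VcT m) π) {p : Fin m → VT m} (hp : ∀ i, p i ∈ VcT m i)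
    (hsum : ∑ i : Fin m, cT m (p (π i)) (p (π (cyc i))) = tourValue (cT m) (VcT m) π)
    (i : Fin m) : (p i).2 = true := by
  by_contra hi
  have hm := two_le_of_not_optTour hπ hopt
  have ha := aCount_lt_of_not_optTour hπ hopt
  have hsq := sq_le_sum_cT hm hπ ha hp (j := i) (by simpa using hi)
  rw [hsum, tourValue_eq_of_aCount_lt hm hπ ha] at hsq
  exact hsq.not_gt (add_lt_sq_of_lt hm ha)

end

theorem GTSP_GG_cost_structure_general (m : ℕ) :
    (∀ π : Fin m → Fin m, Function.Bijective π → ¬ OptTour (cT m) (VcT m) π →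
      tourValue (cT m) (VcT m) π = (m : ℝ≥0∞) + (aCount m π : ℝ≥0∞) ∧
      ∀ p : Fin m → VT m, (∀ i, p i ∈ VcT m i) →
        (∑ i : Fin m, cT m (p (π i)) (p (π (cyc i)))) = tourValue (cT m) (VcT m) π →
        ∀ i, (p i).2 = true) ∧
    (∀ π π' : Fin m → Fin m, Function.Bijective π → Function.Bijective π' →
      ¬ OptTour (cT m) (VcT m) π → ¬ OptTour (cT m) (VcT m) π' →
      aCount m π < aCount m π' →
      tourValue (cT m) (VcT m) π < tourValue (cT m) (VcT m) π') := by
  refine ⟨fun π hπ hopt => ⟨tourValue_eq_of_not_optTour hπ hopt,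
    fun p hp hsum => snd_eq_true_of_sum_cT_eq_tourValue hπ hopt hp hsum⟩,
    fun π π' hπ hπ' hopt hopt' hlt => ?_⟩
  rw [tourValue_eq_of_not_optTour hπ hopt, tourValue_eq_of_not_optTour hπ' hopt']
  exact_mod_cast (by omega : m + aCount m π < m + aCount m π')

/-- In the GTSP instance `G_G` on `m` clusters, for every non-optimal cluster
permutation `π`, the lower-level optimal node selection uses only white nodes and the cost
of `π` equals `c(π) = m + a(π)`; consequently, if `π` and `π'` are two non-optimal cluster
permutations with `a(π') > a(π)`, then `c(π') > c(π)`. -/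
theorem GTSP_GG_cost_structure (m : ℕ) (hm : 3 ≤ m) :
    (∀ π : Fin m → Fin m, Function.Bijective π → ¬ OptTour (cT m) (VcT m) π →
      tourValue (cT m) (VcT m) π = (m : ℝ≥0∞) + (aCount m π : ℝ≥0∞) ∧
      ∀ p : Fin m → VT m, (∀ i, p i ∈ VcT m i) →
        (∑ i : Fin m, cT m (p (π i)) (p (π (cyc i)))) = tourValue (cT m) (VcT m) π →
        ∀ i, (p i).2 = true) ∧
    (∀ π π' : Fin m → Fin m, Function.Bijective π → Function.Bijective π' →
      ¬ OptTour (cT m) (VcT m) π → ¬ OptTour (cT m) (VcT m) π' →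
      aCount m π < aCount m π' →
      tourValue (cT m) (VcT m) π < tourValue (cT m) (VcT m) π') :=
  GTSP_GG_cost_structure_general m
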